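/- arXiv:1803.08881 — 5 statements merged into one kernel-verified Lean document; each statement's English description precedes it below -/
import Mathlib

section
/- Let σ denote Kubota's 2-cocycle on SL₂(ℚ₂), and let 𝒩 be the set of matrices (a b; c d) ∈ SL₂(ℚ₂) with a − 1 ∈ 8ℤ₂, d − 1 ∈ 8ℤ₂, b ∈ 4ℤ₂ and c ∈ 8ℤ₂. Then σ(v, v′) = 1 for all v, v′ ∈ 𝒩; that is, the trivial section v ↦ ⟨v, 1⟩ is a group homomorphism from 𝒩 into the metaplectic double cover of SL₂(ℚ₂). -/
/-! Every element of `1 + 8ℤ₂` is a square (Hensel), so for `g = (a b; c d)`, `g' = (a' b'; c' d')`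
in `𝒩` the entries `d`, `a'`, `d'` are nonzero squares. If `c = 0` or `c' = 0`, one argument of
the Hilbert symbol in `σ(g, g')` collapses to one of these squares. Otherwise the arguments are
`w / c` and `w / c'` with `w = x(g g')`, and the lower-left entry `c a' + d c'` of `g g'` is
either `w` or `0`; in both cases the vector `(c √a', c' √d)` makes `z² = (w/c) x² + (w/c') y²`
solvable. -/

open scoped Classical

/-- The quadratic Hilbert symbol over `ℚ_p`: `1` if `z² = a·x² + b·y²` has a nonzero
solution, `-1` otherwise. -/
noncomputable def hilbertSym (p : ℕ) [Fact p.Prime] (a b : ℚ_[p]) : ℤ :=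
  if ∃ x y z : ℚ_[p], (x, y, z) ≠ (0, 0, 0) ∧ z ^ 2 = a * x ^ 2 + b * y ^ 2 then 1 else -1

/-- Kubota's function `x(g)`: the lower-left entry if nonzero, else the lower-right entry. -/
noncomputable def kubotaX (p : ℕ) [Fact p.Prime] (g : Matrix (Fin 2) (Fin 2) ℚ_[p]) : ℚ_[p] :=
  if g 1 0 ≠ 0 then g 1 0 else g 1 1

/-- Kubota's 2-cocycle on `SL₂(ℚ_p)`. -/
noncomputable def kubota (p : ℕ) [Fact p.Prime]
    (g g' : Matrix.SpecialLinearGroup (Fin 2) ℚ_[p]) : ℤ :=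
  hilbertSym p (kubotaX p ↑(g * g') / kubotaX p ↑g) (kubotaX p ↑(g * g') / kubotaX p ↑g')

/-- The congruence subgroup `𝒩 = {(a b; c d) : a-1, d-1 ∈ 8ℤ₂, b ∈ 4ℤ₂, c ∈ 8ℤ₂}`. -/
def inN2 (v : Matrix.SpecialLinearGroup (Fin 2) ℚ_[2]) : Prop :=
  (∃ y : ℤ_[2], (v : Matrix (Fin 2) (Fin 2) ℚ_[2]) 0 0 - 1 = 8 * (y : ℚ_[2])) ∧
  (∃ y : ℤ_[2], (v : Matrix (Fin 2) (Fin 2) ℚ_[2]) 1 1 - 1 = 8 * (y : ℚ_[2])) ∧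
  (∃ y : ℤ_[2], (v : Matrix (Fin 2) (Fin 2) ℚ_[2]) 0 1 = 4 * (y : ℚ_[2])) ∧
  (∃ y : ℤ_[2], (v : Matrix (Fin 2) (Fin 2) ℚ_[2]) 1 0 = 8 * (y : ℚ_[2]))

def HilbertSolvable {K : Type*} [Field K] (a b : K) : Prop :=
  ∃ x y z : K, (x, y, z) ≠ (0, 0, 0) ∧ z ^ 2 = a * x ^ 2 + b * y ^ 2

section HilbertSolvable

variable {K : Type*} [Field K] {a b : K}

theorem hilbertSolvable_of_isSquare_left (ha : IsSquare a) : HilbertSolvable a b := by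
  obtain ⟨s, rfl⟩ := ha
  exact ⟨1, 0, s, by simp, by ring⟩

theorem hilbertSolvable_of_isSquare_right (hb : IsSquare b) : HilbertSolvable a b := by
  obtain ⟨t, rfl⟩ := hb
  exact ⟨0, 1, t, by simp, by ring⟩

theorem hilbertSolvable_div_div {c c' w : K} (hc : c ≠ 0)
    (ha : IsSquare a) (ha0 : a ≠ 0) (hb : IsSquare b)
    (hw : w = c * a + b * c' ∨ c * a + b * c' = 0) : HilbertSolvable (w / c) (w / c') := by
  obtain ⟨s, rfl⟩ := ha
  obtain ⟨t, rfl⟩ := hb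
  have hx : c * s ≠ 0 := mul_ne_zero hc (left_ne_zero_of_mul ha0)
  have hsum : w / c * (c * s) ^ 2 + w / c' * (c' * t) ^ 2 = w * (c * (s * s) + t * t * c') := by
    field_simp
  rcases hw with hw | hw
  · exact ⟨c * s, c' * t, w, by simp [hx], by rw [hsum, ← hw, sq]⟩
  · exact ⟨c * s, c' * t, 0, by simp [hx], by rw [hsum, hw]; ring⟩

end HilbertSolvable

namespace Matrix.SpecialLinearGroup

open scoped MatrixGroups

variable {R : Type*} [CommRing R] (g g' : SL(2, R))

theorem fin_two_mul_apply_one_zero : (g * g') 1 0 = g 1 0 * g' 0 0 + g 1 1 * g' 1 0 := by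
  simp [Matrix.mul_apply, Fin.sum_univ_two]

theorem fin_two_mul_apply_one_one : (g * g') 1 1 = g 1 0 * g' 0 1 + g 1 1 * g' 1 1 := by
  simp [Matrix.mul_apply, Fin.sum_univ_two]

theorem apply_zero_zero_mul_apply_one_one_eq_one {g : SL(2, R)} (hg : g 1 0 = 0) :
    g 0 0 * g 1 1 = 1 := by
  have hdet := g.det_coe
  rwa [Matrix.det_fin_two, hg, mul_zero, sub_zero] at hdet

end Matrix.SpecialLinearGroup

section Kubota

open Matrix.SpecialLinearGroup
open scoped MatrixGroups

variable {p : ℕ} [Fact p.Prime]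

theorem hilbertSym_eq_one {a b : ℚ_[p]} (h : HilbertSolvable a b) : hilbertSym p a b = 1 :=
  if_pos h

theorem kubotaX_of_ne_zero {g : Matrix (Fin 2) (Fin 2) ℚ_[p]} (h : g 1 0 ≠ 0) :
    kubotaX p g = g 1 0 :=
  if_pos h

theorem kubotaX_of_eq_zero {g : Matrix (Fin 2) (Fin 2) ℚ_[p]} (h : g 1 0 = 0) :
    kubotaX p g = g 1 1 :=
  if_neg (not_not.2 h)

theorem kubotaX_eq_or_eq_zero (g : Matrix (Fin 2) (Fin 2) ℚ_[p]) :
    kubotaX p g = g 1 0 ∨ g 1 0 = 0 := by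
  by_cases h : g 1 0 = 0
  · exact .inr h
  · exact .inl (kubotaX_of_ne_zero h)

theorem kubota_eq_one_of_isSquare (g g' : SL(2, ℚ_[p])) (hd : IsSquare (g 1 1))
    (ha' : IsSquare (g' 0 0)) (ha'0 : g' 0 0 ≠ 0) (hd' : IsSquare (g' 1 1)) :
    kubota p g g' = 1 := by
  apply hilbertSym_eq_one
  have hprod := fin_two_mul_apply_one_zero g g'
  by_cases hc : g 1 0 = 0
  · have hd0 : g 1 1 ≠ 0 :=
      right_ne_zero_of_mul_eq_one (apply_zero_zero_mul_apply_one_one_eq_one hc)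
    rw [kubotaX_of_eq_zero hc]
    by_cases hc' : g' 1 0 = 0
    · have hM : (g * g') 1 0 = 0 := by rw [hprod, hc, hc']; ring
      rw [kubotaX_of_eq_zero hM, kubotaX_of_eq_zero hc', fin_two_mul_apply_one_one, hc, zero_mul,
        zero_add, mul_div_cancel_left₀ _ hd0]
      exact hilbertSolvable_of_isSquare_left hd'
    · have hM : (g * g') 1 0 = g 1 1 * g' 1 0 := by rw [hprod, hc]; ring
      rw [kubotaX_of_ne_zero (hM ▸ mul_ne_zero hd0 hc'), kubotaX_of_ne_zero hc', hM,
        mul_div_cancel_right₀ _ hc']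
      exact hilbertSolvable_of_isSquare_right hd
  · rw [kubotaX_of_ne_zero hc]
    by_cases hc' : g' 1 0 = 0
    · have hM : (g * g') 1 0 = g 1 0 * g' 0 0 := by rw [hprod, hc']; ring
      rw [kubotaX_of_ne_zero (hM ▸ mul_ne_zero hc ha'0), hM, mul_div_cancel_left₀ _ hc]
      exact hilbertSolvable_of_isSquare_left ha'
    · rw [kubotaX_of_ne_zero hc']
      refine hilbertSolvable_div_div hc ha' ha'0 hd ?_
      rw [← hprod]
      exact kubotaX_eq_or_eq_zero _

end Kubota

open Polynomial in
theorem PadicInt.isSquare_one_add_eight_mul (y : ℤ_[2]) : IsSquare (1 + 8 * y) := by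
  have h2 : ‖(2 : ℤ_[2])‖ = 2⁻¹ := by simpa using PadicInt.norm_p (p := 2)
  have hnorm : ‖(X ^ 2 - C (1 + 8 * y)).aeval (1 : ℤ_[2])‖ <
      ‖(X ^ 2 - C (1 + 8 * y)).derivative.aeval (1 : ℤ_[2])‖ ^ 2 := by
    simp only [map_sub, map_pow, aeval_X, aeval_C, derivative_C, derivative_X_pow, map_mul,
      sub_zero, one_pow, Algebra.algebraMap_self, RingHom.id_apply]
    calc ‖1 - (1 + 8 * y)‖ = ‖(2 : ℤ_[2])‖ ^ 3 * ‖y‖ := by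
          rw [← norm_pow, ← norm_mul, ← norm_neg]; ring_nf
      _ ≤ ‖(2 : ℤ_[2])‖ ^ 3 := mul_le_of_le_one_right (by positivity) (PadicInt.norm_le_one y)
      _ < _ := by simp [h2]; norm_num
  obtain ⟨z, hz, -⟩ := hensels_lemma hnorm
  simp only [map_sub, map_pow, aeval_X, aeval_C, Algebra.algebraMap_self, RingHom.id_apply] at hz
  exact ⟨z, by linear_combination -hz⟩

theorem PadicInt.one_add_eight_mul_ne_zero (y : ℤ_[2]) : 1 + 8 * y ≠ 0 := by
  intro h
  have h2 := congrArg PadicInt.toZMod h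
  rw [map_add, map_mul, map_one, map_ofNat, map_zero, show (8 : ZMod 2) = 0 by decide,
    zero_mul, add_zero] at h2
  exact one_ne_zero h2

theorem Padic.eq_coe_one_add_eight_mul {w : ℚ_[2]} {y : ℤ_[2]} (h : w - 1 = 8 * y) :
    w = ((1 + 8 * y : ℤ_[2]) : ℚ_[2]) := by
  have h8 : ((8 : ℤ_[2]) : ℚ_[2]) = 8 := map_ofNat PadicInt.Coe.ringHom 8
  push_cast [h8]
  linear_combination h

theorem Padic.isSquare_of_sub_one_eq_eight_mul {w : ℚ_[2]} {y : ℤ_[2]} (h : w - 1 = 8 * y) :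
    IsSquare w := by
  rw [Padic.eq_coe_one_add_eight_mul h]
  exact (PadicInt.isSquare_one_add_eight_mul y).map PadicInt.Coe.ringHom

theorem Padic.ne_zero_of_sub_one_eq_eight_mul {w : ℚ_[2]} {y : ℤ_[2]} (h : w - 1 = 8 * y) :
    w ≠ 0 := by
  rw [Padic.eq_coe_one_add_eight_mul h]
  exact PadicInt.coe_ne_zero.2 (PadicInt.one_add_eight_mul_ne_zero y)

/-- Kubota's cocycle is trivial on the congruence subgroup `𝒩` of `SL₂(ℚ₂)`, i.e. the
trivial section splits the metaplectic double cover over `𝒩`. -/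
theorem kubota_cocycle_trivial_on_N_Q2 (v v' : Matrix.SpecialLinearGroup (Fin 2) ℚ_[2])
    (hv : inN2 v) (hv' : inN2 v') : kubota 2 v v' = 1 := by
  obtain ⟨-, ⟨_, hd⟩, -, -⟩ := hv
  obtain ⟨⟨_, ha'⟩, ⟨_, hd'⟩, -, -⟩ := hv'
  exact kubota_eq_one_of_isSquare v v' (Padic.isSquare_of_sub_one_eq_eight_mul hd)
    (Padic.isSquare_of_sub_one_eq_eight_mul ha') (Padic.ne_zero_of_sub_one_eq_eight_mul ha')
    (Padic.isSquare_of_sub_one_eq_eight_mul hd')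
end

section
/- For every t ∈ ℤ₂ with t ≠ 0 and every r ∈ 8ℤ₂ such that 1 + t + r ≠ 0, the quadratic Hilbert symbol over ℚ₂ satisfies (−t, 1 + t + r) = 1. -/
open scoped Classical

/-! Taking `x = y = 1` reduces the claim to `1 + r` being a square in `ℚ₂`, and `1 + 8y` is a
square in `ℤ₂` by Hensel's lemma applied to `X² - (1 + 8y)` at `X = 1`, since
`|8y| ≤ 1/8 < 1/4 = |2|²`. -/

lemma hilbertSym_eq_one_of_isSquare_add {p : ℕ} [Fact p.Prime] {a b : ℚ_[p]}
    (h : IsSquare (a + b)) : hilbertSym p a b = 1 := by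
  obtain ⟨z, hz⟩ := h
  rw [hilbertSym, if_pos]
  exact ⟨1, 1, z, by simp, by rw [sq, ← hz]; ring⟩

namespace PadicInt

lemma isSquare_one_add_eight_mul_s2 (y : ℤ_[2]) : IsSquare (1 + 8 * y) := by
  set F : Polynomial ℤ_[2] := .X ^ 2 - .C (1 + 8 * y)
  have h2 : ‖(2 : ℤ_[2])‖ = 2⁻¹ := by simpa using norm_p (p := 2)
  have heval : F.eval 1 = -(2 ^ 3 * y) := by
    simp only [F, Polynomial.eval_sub, Polynomial.eval_pow, Polynomial.eval_X, Polynomial.eval_C]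
    ring
  have hderiv : F.derivative.eval 1 = 2 := by norm_num [F]
  have hnorm : ‖F.eval 1‖ < ‖F.derivative.eval 1‖ ^ 2 := by
    rw [heval, hderiv, norm_neg, norm_mul, norm_pow, h2]
    nlinarith [norm_le_one y, norm_nonneg y]
  obtain ⟨z, hz, -⟩ := hensels_lemma hnorm
  have hz_sq : z ^ 2 = 1 + 8 * y := by simpa [F, sub_eq_zero] using hz
  exact ⟨z, by rw [← hz_sq, sq]⟩

lemma isSquare_one_add_eight_mul_coe (y : ℤ_[2]) : IsSquare (1 + 8 * (y : ℚ_[2])) := by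
  obtain ⟨z, hz⟩ := isSquare_one_add_eight_mul_s2 y
  exact ⟨z, by exact_mod_cast congrArg ((↑) : ℤ_[2] → ℚ_[2]) hz⟩

end PadicInt

theorem hilbertSym_neg_t_one_add_t_add_r_general (t : ℤ_[2])
    (r : ℚ_[2]) (hr : ∃ y : ℤ_[2], r = 8 * (y : ℚ_[2])) :
    hilbertSym 2 (-(t : ℚ_[2])) (1 + (t : ℚ_[2]) + r) = 1 := by
  obtain ⟨y, rfl⟩ := hr
  apply hilbertSym_eq_one_of_isSquare_add
  convert PadicInt.isSquare_one_add_eight_mul_coe y using 1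
  ring

/-- For `t ∈ ℤ₂ \ {0}` and `r ∈ 8ℤ₂` with `1 + t + r ≠ 0`, the Hilbert symbol
`(−t, 1 + t + r)` over `ℚ₂` equals `1`. -/
theorem hilbertSym_neg_t_one_add_t_add_r (t : ℤ_[2]) (ht : t ≠ 0)
    (r : ℚ_[2]) (hr : ∃ y : ℤ_[2], r = 8 * (y : ℚ_[2]))
    (h : (1 : ℚ_[2]) + (t : ℚ_[2]) + r ≠ 0) :
    hilbertSym 2 (-(t : ℚ_[2])) (1 + (t : ℚ_[2]) + r) = 1 :=
  hilbertSym_neg_t_one_add_t_add_r_general t r hr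
end

section
/- Let p be a prime and let a, c, u ∈ ℚ_p^× with a + u·a⁻¹·c ≠ 0. Then the quadratic Hilbert symbols over ℚ_p satisfy (−a·c, a + u·a⁻¹·c) · (u·a⁻¹, a²·u⁻¹ + c) = (−u·c, a) · (u·a⁻¹, −1). -/
open scoped Classical

/-!
Once the Hilbert symbol is known to be symmetric and multiplicative in each argument, the identity
is formal: with `s = u a⁻¹` and `b = a + s c` one has `a² u⁻¹ + c = s⁻¹ b`, `(s, -s⁻¹) = 1`,
`(-a c) s = -u c`, and `a b = a² + u c` is a norm from `ℚ_p(√(-u c))`.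

Multiplicativity says that for a non-square `d` the norms from `ℚ_p(√d)` form a subgroup of index
at most `2` in `ℚ_pˣ`. It contains the squares, so it suffices to find norms in enough square
classes. By Hensel's lemma the class of `t = u p^v` is detected by the parity of `v` and the
Legendre symbol of `u` for odd `p`, and by `u mod 8` for `p = 2`, so there are `4`, resp. `8`,
classes. For odd `p`, either `-d` or a sum of two squares is a non-square norm; for `p = 2`, a
table of norms `z² - δ`, for representatives `δ` of the classes, gives two independent ones.
-/

section QuadNorm

variable {K : Type*} [Field K]

/-- `t` is a norm from `K(√d)`. -/
def IsQuadNorm (d t : K) : Prop := ∃ z w : K, z ^ 2 - d * w ^ 2 = t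

lemma IsQuadNorm.mul {d s t : K} (hs : IsQuadNorm d s) (ht : IsQuadNorm d t) :
    IsQuadNorm d (s * t) := by
  obtain ⟨z, w, rfl⟩ := hs
  obtain ⟨z', w', rfl⟩ := ht
  exact ⟨z * z' + d * w * w', z * w' + w * z', by ring⟩

lemma IsQuadNorm.inv {d t : K} (ht : IsQuadNorm d t) : IsQuadNorm d t⁻¹ := by
  obtain ⟨z, w, rfl⟩ := ht
  refine ⟨z / (z ^ 2 - d * w ^ 2), w / (z ^ 2 - d * w ^ 2), ?_⟩
  rcases eq_or_ne (z ^ 2 - d * w ^ 2) 0 with h | h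
  · simp [h]
  · field_simp

lemma IsSquare.isQuadNorm {t : K} (d : K) (ht : IsSquare t) : IsQuadNorm d t := by
  obtain ⟨s, rfl⟩ := ht
  exact ⟨s, 0, by ring⟩

lemma isQuadNorm_mul_sq_iff {d e t : K} (he : e ≠ 0) :
    IsQuadNorm (d * e ^ 2) t ↔ IsQuadNorm d t := by
  constructor
  · rintro ⟨z, w, rfl⟩
    exact ⟨z, e * w, by ring⟩
  · rintro ⟨z, w, rfl⟩
    exact ⟨z, w / e, by field_simp⟩

lemma isQuadNorm_iff_of_isSquare_div {d d' t : K} (hd : d ≠ 0) (hd' : d' ≠ 0)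
    (h : IsSquare (d / d')) : IsQuadNorm d t ↔ IsQuadNorm d' t := by
  obtain ⟨e, he⟩ := h
  rw [div_eq_iff hd'] at he
  have he₀ : e ≠ 0 := by
    rintro rfl
    exact hd (by simpa using he)
  rw [he, mul_comm, ← sq, isQuadNorm_mul_sq_iff he₀]

def quadNormSubgroup (d : K) : Subgroup Kˣ where
  carrier := {t | IsQuadNorm d t}
  mul_mem' hs ht := by simpa using hs.mul ht
  one_mem' := IsSquare.isQuadNorm d ⟨1, by simp⟩
  inv_mem' ht := by simpa using ht.inv

lemma exists_sq_eq_add_iff (a b : K) :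
    (∃ x y z : K, (x, y, z) ≠ (0, 0, 0) ∧ z ^ 2 = a * x ^ 2 + b * y ^ 2) ↔
      IsSquare a ∨ IsQuadNorm a b := by
  constructor
  · rintro ⟨x, y, z, hxyz, h⟩
    rcases eq_or_ne y 0 with rfl | hy
    · have hx : x ≠ 0 := by
        rintro rfl
        simp_all
      exact Or.inl ⟨z / x, by field_simp; linear_combination -h⟩
    · exact Or.inr ⟨z / y, x / y, by field_simp; linear_combination h⟩
  · rintro (⟨s, rfl⟩ | ⟨z, w, rfl⟩)
    · exact ⟨1, 0, s, by simp, by ring⟩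
    · exact ⟨w, 1, z, by simp, by ring⟩

end QuadNorm

namespace Subgroup

variable {G H : Type*} [Group G] [Group H]

lemma mul_mem_iff_of_index_dvd_two {N : Subgroup G} (hN : N.index ∣ 2) {a b : G} :
    a * b ∈ N ↔ (a ∈ N ↔ b ∈ N) := by
  rcases (Nat.dvd_prime Nat.prime_two).mp hN with h | h
  · simp [index_eq_one.mp h]
  · exact mul_mem_iff_of_index_two h

lemma index_dvd_two_of_card_le {N : Subgroup G} [Finite H] (f : G →* H)
    (hf : f.ker ≤ N) (hcard : Nat.card H ≤ 2 * Nat.card (N.map f)) : N.index ∣ 2 := by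
  set B := N.map f
  have hB : B.index ∣ 2 := by
    have hpos : 0 < Nat.card B := Nat.card_pos
    have hle : B.index ≤ 2 := by
      have := B.card_mul_index
      nlinarith
    obtain h | h : B.index = 1 ∨ B.index = 2 := by
      have := B.index_ne_zero_of_finite
      omega
    all_goals simp [h]
  rw [← comap_map_eq_self hf, index_comap]
  exact (relIndex_dvd_index_of_le (map_le_range f N)).trans hB

lemma four_le_card_of_mem {B : Subgroup H} [Finite H] {a b : H} (ha : a ∈ B) (hb : b ∈ B)
    (ha₁ : a ≠ 1) (hb₁ : b ≠ 1) (hab : a ≠ b) (hab₁ : a * b ≠ 1) : 4 ≤ Nat.card B := by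
  have hsub : (({1, a, b, a * b} : Finset H) : Set H) ⊆ B := by
    simp [Set.insert_subset_iff, B.one_mem, ha, hb, B.mul_mem ha hb]
  have hcard : ({1, a, b, a * b} : Finset H).card = 4 := by
    rw [Finset.card_insert_of_notMem, Finset.card_insert_of_notMem, Finset.card_pair]
    all_goals simp [ha₁, hb₁, hab, ha₁.symm, hb₁.symm, hab₁.symm]
  change 4 ≤ Nat.card (B : Set H)
  rw [Nat.card_coe_set_eq, ← hcard, ← Set.ncard_coe_finset]
  exact Set.ncard_le_ncard hsub

end Subgroup

namespace PadicInt

variable {p : ℕ} [Fact p.Prime]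

lemma toZMod_eq_zero_iff {x : ℤ_[p]} : toZMod x = 0 ↔ ‖x‖ < 1 := by
  rw [← RingHom.mem_ker, ker_toZMod, IsLocalRing.mem_maximalIdeal, mem_nonunits]

lemma isUnit_of_toZMod_ne_zero {x : ℤ_[p]} (hx : toZMod x ≠ 0) : IsUnit x :=
  isUnit_iff.mpr <| le_antisymm (norm_le_one x) <| not_lt.mp (mt toZMod_eq_zero_iff.mpr hx)

lemma isUnit_intCast_of_not_dvd {n : ℤ} (hn : ¬(p : ℤ) ∣ n) : IsUnit (n : ℤ_[p]) :=
  isUnit_iff.mpr <| le_antisymm (norm_le_one _) <|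
    not_lt.mp (mt (norm_int_lt_one_iff_dvd n).mp hn)

lemma isSquare_of_norm_sq_sub_lt {u : ℤ_[p]} (a : ℤ_[p]) (h : ‖a ^ 2 - u‖ < ‖2 * a‖ ^ 2) :
    IsSquare u := by
  have key := hensels_lemma (F := Polynomial.X ^ 2 - Polynomial.C u) (a := a)
  simp only [map_sub, map_pow, Polynomial.aeval_X, Polynomial.aeval_C, Polynomial.derivative_X_pow,
    Polynomial.derivative_C, sub_zero, Algebra.algebraMap_self, RingHom.id_apply,
    Nat.cast_ofNat] at key
  obtain ⟨z, hz, -⟩ := key (by simpa using h)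
  exact ⟨z, by rw [← sq, sub_eq_zero.mp hz]⟩

lemma isSquare_of_isSquare_toZMod (hp : p ≠ 2) {u : ℤ_[p]} (hu : IsUnit u)
    (h : IsSquare (toZMod u)) : IsSquare u := by
  obtain ⟨r, hr⟩ := h
  have hr₀ : r ≠ 0 := by
    rintro rfl
    rw [mul_zero, toZMod_eq_zero_iff, isUnit_iff.mp hu] at hr
    exact lt_irrefl _ hr
  have hlift : toZMod (r.val : ℤ_[p]) = r := by simp
  refine isSquare_of_norm_sq_sub_lt (r.val : ℤ_[p]) ?_
  have h2r : ‖2 * (r.val : ℤ_[p])‖ = 1 := by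
    refine isUnit_iff.mp (isUnit_of_toZMod_ne_zero ?_)
    rw [map_mul, hlift, map_ofNat]
    exact mul_ne_zero (Ring.two_ne_zero (by rwa [ZMod.ringChar_zmod_n])) hr₀
  rw [h2r, one_pow, ← toZMod_eq_zero_iff, map_sub, map_pow, hlift, hr, sq, sub_self]

lemma isSquare_of_toZModPow_three_eq_one {u : ℤ_[2]} (h : toZModPow 3 u = 1) : IsSquare u := by
  refine isSquare_of_norm_sq_sub_lt 1 ?_
  have hmem : (1 : ℤ_[2]) ^ 2 - u ∈ Ideal.span {((2 : ℕ) : ℤ_[2]) ^ 3} := by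
    rw [← ker_toZModPow, RingHom.mem_ker, map_sub, h]
    simp
  have h2 : ‖(2 : ℤ_[2]) * 1‖ = 2⁻¹ := by simpa using norm_p (p := 2)
  rw [h2]
  refine ((norm_le_pow_iff_mem_span_pow _ 3).mpr hmem).trans_lt ?_
  norm_num

end PadicInt

namespace Padic

variable {p : ℕ} [Fact p.Prime]

lemma norm_mul_zpow_neg_valuation {t : ℚ_[p]} (ht : t ≠ 0) :
    ‖t * (p : ℚ_[p]) ^ (-t.valuation)‖ = 1 := by
  rw [norm_mul, norm_eq_zpow_neg_valuation ht, norm_zpow, norm_p, inv_zpow', neg_neg,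
    ← zpow_add₀ (NeZero.ne _), neg_add_cancel, zpow_zero]

/-- The unit `u` in `t = u * p ^ t.valuation`. -/
noncomputable def unitPart : ℚ_[p]ˣ →* ℤ_[p]ˣ where
  toFun t := PadicInt.mkUnits (norm_mul_zpow_neg_valuation t.ne_zero)
  map_one' := Units.ext (Subtype.ext (by simp))
  map_mul' s t := by
    refine Units.ext (Subtype.ext ?_)
    simp only [Units.val_mul, PadicInt.mkUnits_eq, PadicInt.coe_mul,
      valuation_mul s.ne_zero t.ne_zero, neg_add, zpow_add₀ (NeZero.ne (p : ℚ_[p]))]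
    ring

lemma coe_unitPart (t : ℚ_[p]ˣ) :
    ((unitPart t : ℤ_[p]) : ℚ_[p]) = t * (p : ℚ_[p]) ^ (-(t : ℚ_[p]).valuation) := rfl

lemma valuation_coe_units (u : ℤ_[p]ˣ) : ((u : ℤ_[p]) : ℚ_[p]).valuation = 0 := by
  have h := PadicInt.norm_units u
  rw [PadicInt.norm_def, norm_eq_zpow_neg_valuation (by simp)] at h
  simpa using (zpow_eq_one_iff_right₀ (by exact_mod_cast (Fact.out : p.Prime).pos.le)
    (by exact_mod_cast (Fact.out : p.Prime).ne_one)).mp h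

lemma valuation_eq_and_unitPart_eq_of_coe_eq {t : ℚ_[p]ˣ} {u : ℤ_[p]ˣ} {k : ℤ}
    (h : (t : ℚ_[p]) = u * (p : ℚ_[p]) ^ k) : (t : ℚ_[p]).valuation = k ∧ unitPart t = u := by
  have hp : (p : ℚ_[p]) ≠ 0 := NeZero.ne _
  have hv : (t : ℚ_[p]).valuation = k := by
    rw [h, valuation_mul (by simp) (zpow_ne_zero _ hp), valuation_coe_units, valuation_zpow,
      valuation_p, mul_one, zero_add]
  refine ⟨hv, Units.ext (Subtype.ext ?_)⟩
  rw [coe_unitPart, hv, h, mul_assoc, ← zpow_add₀ hp, add_neg_cancel, zpow_zero, mul_one]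

lemma unitPart_mul_zpow (t : ℚ_[p]ˣ) :
    (t : ℚ_[p]) = unitPart t * (p : ℚ_[p]) ^ (t : ℚ_[p]).valuation := by
  rw [coe_unitPart, mul_assoc, ← zpow_add₀ (NeZero.ne _), neg_add_cancel, zpow_zero, mul_one]

noncomputable def valuationParity : ℚ_[p]ˣ →* Multiplicative (ZMod 2) where
  toFun t := Multiplicative.ofAdd ((t : ℚ_[p]).valuation : ZMod 2)
  map_one' := by simp
  map_mul' s t := by simp [valuation_mul s.ne_zero t.ne_zero, ← ofAdd_add]

lemma isSquare_of_valuationParity_eq_one {t : ℚ_[p]ˣ} (hv : valuationParity t = 1)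
    (hu : IsSquare (unitPart t : ℤ_[p])) : IsSquare (t : ℚ_[p]) := by
  obtain ⟨k, hk⟩ := ZMod.intCast_eq_zero_iff_even.mp (by simpa [valuationParity] using hv)
  obtain ⟨z, hz⟩ := hu
  refine ⟨z * (p : ℚ_[p]) ^ k, ?_⟩
  rw [unitPart_mul_zpow t, hz, hk, zpow_add₀ (NeZero.ne _)]
  push_cast
  ring

noncomputable def squareClass (p : ℕ) [Fact p.Prime] : ℚ_[p]ˣ →* Multiplicative (ZMod 2) × ℤˣ :=
  valuationParity.prod <| (quadraticChar (ZMod p)).toUnitHom.comp <|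
    (Units.map PadicInt.toZMod.toMonoidHom).comp unitPart

lemma coe_squareClass_snd (t : ℚ_[p]ˣ) :
    ((squareClass p t).2 : ℤ) = quadraticChar (ZMod p) (PadicInt.toZMod (unitPart t : ℤ_[p])) :=
  rfl

lemma toZMod_unitPart_ne_zero (t : ℚ_[p]ˣ) : PadicInt.toZMod (unitPart t : ℤ_[p]) ≠ 0 := by
  rw [Ne, PadicInt.toZMod_eq_zero_iff, PadicInt.norm_units]
  exact lt_irrefl 1

lemma isSquare_of_squareClass_eq_one (hp : p ≠ 2) {t : ℚ_[p]ˣ} (h : squareClass p t = 1) :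
    IsSquare (t : ℚ_[p]) := by
  have hres := congrArg (fun g => (g.2 : ℤ)) h
  simp only [coe_squareClass_snd, Prod.snd_one, Units.val_one] at hres
  have hv : valuationParity t = 1 := congrArg Prod.fst h
  exact isSquare_of_valuationParity_eq_one hv <|
    PadicInt.isSquare_of_isSquare_toZMod hp (unitPart t).isUnit <|
      (quadraticChar_one_iff_isSquare (toZMod_unitPart_ne_zero t)).mp hres

lemma exists_mem_quadNormSubgroup_squareClass_ne_one (hp : p ≠ 2) (d : ℚ_[p]ˣ) :
    ∃ h ∈ quadNormSubgroup (d : ℚ_[p]), squareClass p h ≠ 1 := by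
  by_cases hd : squareClass p (-d) ≠ 1
  · exact ⟨-d, ⟨0, 1, by simp⟩, hd⟩
  -- now `d ≡ -1` modulo squares, so the norms are the sums of two squares
  have hnorm : ∀ t, IsQuadNorm (d : ℚ_[p]) t ↔ IsQuadNorm (-1) t := fun t =>
    isQuadNorm_iff_of_isSquare_div d.ne_zero (by norm_num) <| by
      rw [div_neg, div_one]
      simpa using isSquare_of_squareClass_eq_one hp (not_not.mp hd)
  obtain ⟨r, hr⟩ := FiniteField.exists_nonsquare (F := ZMod p) (by rwa [ZMod.ringChar_zmod_n])
  obtain ⟨a, b, hab⟩ := FiniteField.exists_root_sum_quadratic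
    (Polynomial.degree_X_pow_sub_C (by norm_num) r) (Polynomial.degree_X_pow (R := ZMod p) 2)
    (by rw [ZMod.card]; exact (Fact.out : p.Prime).mod_two_eq_one_iff_ne_two.mpr hp)
  set x : ℤ_[p] := (a.val : ℤ_[p]) ^ 2 + (b.val : ℤ_[p]) ^ 2
  have hx : PadicInt.toZMod x = r := by
    simp only [x, map_add, map_pow, map_natCast, ZMod.natCast_zmod_val]
    simp at hab
    linear_combination hab
  have hr₀ : r ≠ 0 := by
    rintro rfl
    exact hr ⟨0, by ring⟩
  have hxu : IsUnit x := PadicInt.isUnit_of_toZMod_ne_zero (hx ▸ hr₀)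
  set h := Units.map PadicInt.Coe.ringHom.toMonoidHom hxu.unit
  have hh : (h : ℚ_[p]) = x := rfl
  refine ⟨h, (hnorm _).mpr ⟨a.val, b.val, by rw [hh]; simp only [x]; push_cast; ring⟩, fun h1 => ?_⟩
  have hu : unitPart h = hxu.unit :=
    (valuation_eq_and_unitPart_eq_of_coe_eq (k := 0) (by rw [hh, zpow_zero, mul_one]; rfl)).2
  have := congrArg (fun g => (g.2 : ℤ)) h1
  simp only [coe_squareClass_snd, hu, IsUnit.unit_spec, hx, Prod.snd_one, Units.val_one,
    quadraticChar_neg_one_iff_not_isSquare.mpr hr] at this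
  norm_num at this

noncomputable def squareClassTwo : ℚ_[2]ˣ →* Multiplicative (ZMod 2) × (ZMod (2 ^ 3))ˣ :=
  valuationParity.prod ((Units.map (PadicInt.toZModPow 3).toMonoidHom).comp unitPart)

lemma isSquare_of_squareClassTwo_eq_one {t : ℚ_[2]ˣ} (h : squareClassTwo t = 1) :
    IsSquare (t : ℚ_[2]) := by
  have hv : valuationParity t = 1 := congrArg Prod.fst h
  exact isSquare_of_valuationParity_eq_one hv <|
    PadicInt.isSquare_of_toZModPow_three_eq_one (congrArg (fun g => (g.2 : ZMod (2 ^ 3))) h)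

/-- `(g.1, (g.2 : ZMod 8))` for `g = squareClassTwo m`, provided `4 ∤ m`. -/
def intSquareClassTwo (m : ℤ) : Multiplicative (ZMod 2) × ZMod (2 ^ 3) :=
  if 2 ∣ m then (Multiplicative.ofAdd 1, ((m / 2 : ℤ) : ZMod (2 ^ 3))) else (1, (m : ZMod (2 ^ 3)))

lemma exists_squareClassTwo_eq_intSquareClassTwo {m : ℤ} (hm : ¬4 ∣ m) :
    ∃ t : ℚ_[2]ˣ, (t : ℚ_[2]) = m ∧
      ((squareClassTwo t).1, ((squareClassTwo t).2 : ZMod (2 ^ 3))) = intSquareClassTwo m := by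
  obtain ⟨n, k, hn, hk, rfl⟩ : ∃ n : ℤ, ∃ k : ℕ, ¬2 ∣ n ∧ k ≤ 1 ∧ m = n * 2 ^ k := by
    by_cases h2 : 2 ∣ m
    · obtain ⟨n, rfl⟩ := h2
      exact ⟨n, 1, fun ⟨l, hl⟩ => hm ⟨l, by rw [hl]; ring⟩, le_rfl, by ring⟩
    · exact ⟨m, 0, h2, zero_le_one, by ring⟩
  have hu := PadicInt.isUnit_intCast_of_not_dvd (p := 2) hn
  have hm₀ : ((n * 2 ^ k : ℤ) : ℚ_[2]) ≠ 0 :=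
    Int.cast_ne_zero.mpr fun h => hm (h ▸ dvd_zero 4)
  refine ⟨Units.mk0 _ hm₀, rfl, ?_⟩
  obtain ⟨hv, hunit⟩ :=
    valuation_eq_and_unitPart_eq_of_coe_eq (t := Units.mk0 _ hm₀) (u := hu.unit) (k := k) (by simp)
  refine Prod.ext ?_ ?_
  · change Multiplicative.ofAdd ((Units.mk0 _ hm₀ : ℚ_[2]).valuation : ZMod 2) = _
    rw [hv]
    interval_cases k <;> simp [intSquareClassTwo, hn]
  · change PadicInt.toZModPow 3 (unitPart (Units.mk0 _ hm₀) : ℤ_[2]) = _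
    rw [hunit, IsUnit.unit_spec, map_intCast]
    interval_cases k <;> simp [intSquareClassTwo, hn]

/-- Every nontrivial class has a representative `δ` with two norms `z² - δ` from `ℚ_2(√δ)` in
independent nontrivial classes. -/
lemma exists_rep_and_norms_intSquareClassTwo {g : Multiplicative (ZMod 2) × (ZMod (2 ^ 3))ˣ}
    (hg : g ≠ 1) :
    ∃ r ∈ ([(-1, 1, 2), (2, 0, 1), (3, 0, 1), (5, 0, 2), (6, 0, 1), (10, 0, 1), (14, 0, 1)] :
      List (ℤ × ℤ × ℤ)),
      (g.1, (g.2 : ZMod (2 ^ 3))) = intSquareClassTwo r.1 ∧ ¬4 ∣ r.1 ∧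
      ¬4 ∣ r.2.1 ^ 2 - r.1 ∧ ¬4 ∣ r.2.2 ^ 2 - r.1 ∧
      intSquareClassTwo (r.2.1 ^ 2 - r.1) ≠ 1 ∧ intSquareClassTwo (r.2.2 ^ 2 - r.1) ≠ 1 ∧
      intSquareClassTwo (r.2.1 ^ 2 - r.1) ≠ intSquareClassTwo (r.2.2 ^ 2 - r.1) ∧
      intSquareClassTwo (r.2.1 ^ 2 - r.1) * intSquareClassTwo (r.2.2 ^ 2 - r.1) ≠ 1 := by
  revert g
  decide

lemma four_le_card_map_squareClassTwo {d : ℚ_[2]ˣ} (hd : squareClassTwo d ≠ 1) :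
    4 ≤ Nat.card ((quadNormSubgroup (d : ℚ_[2])).map squareClassTwo) := by
  set ι : Multiplicative (ZMod 2) × (ZMod (2 ^ 3))ˣ → Multiplicative (ZMod 2) × ZMod (2 ^ 3) :=
    fun g => (g.1, g.2)
  have hι : Function.Injective ι := fun g g' h => by
    simp only [ι, Prod.mk.injEq] at h
    exact Prod.ext h.1 (Units.ext h.2)
  obtain ⟨⟨δ, z₁, z₂⟩, -, hδ, hδ₄, h₁₄, h₂₄, h₁, h₂, h₁₂, h₁₂'⟩ :=
    exists_rep_and_norms_intSquareClassTwo hd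
  obtain ⟨δu, hδu, hδc⟩ := exists_squareClassTwo_eq_intSquareClassTwo hδ₄
  obtain ⟨c₁, hc₁, hc₁c⟩ := exists_squareClassTwo_eq_intSquareClassTwo h₁₄
  obtain ⟨c₂, hc₂, hc₂c⟩ := exists_squareClassTwo_eq_intSquareClassTwo h₂₄
  have hsq : IsSquare ((d : ℚ_[2]) / δu) := by
    have h := isSquare_of_squareClassTwo_eq_one (t := d * δu⁻¹)
      (by rw [map_mul, map_inv, hι (hδ.trans hδc.symm), mul_inv_cancel])
    simpa [div_eq_mul_inv] using h
  have hnorm : ∀ {c : ℚ_[2]ˣ} (z : ℤ), (c : ℚ_[2]) = ((z ^ 2 - δ : ℤ) : ℚ_[2]) →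
      squareClassTwo c ∈ (quadNormSubgroup (d : ℚ_[2])).map squareClassTwo := by
    intro c z hc
    refine Subgroup.mem_map_of_mem _ ?_
    change IsQuadNorm _ _
    rw [isQuadNorm_iff_of_isSquare_div d.ne_zero δu.ne_zero hsq, hc, hδu]
    exact ⟨z, 1, by push_cast; ring⟩
  refine Subgroup.four_le_card_of_mem (hnorm z₁ hc₁) (hnorm z₂ hc₂) ?_ ?_ ?_ ?_
  · exact fun h => h₁ (by rw [← hc₁c, h]; rfl)
  · exact fun h => h₂ (by rw [← hc₂c, h]; rfl)
  · exact fun h => h₁₂ (by rw [← hc₁c, ← hc₂c, h])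
  · exact fun h => h₁₂' (by rw [← hc₁c, ← hc₂c]; exact congrArg ι h)

theorem quadNormSubgroup_index_dvd_two {d : ℚ_[p]} (hd : ¬IsSquare d) :
    (quadNormSubgroup d).index ∣ 2 := by
  obtain ⟨d, rfl⟩ : ∃ u : ℚ_[p]ˣ, (u : ℚ_[p]) = d :=
    ⟨Units.mk0 d fun h => hd ⟨0, by rw [h, mul_zero]⟩, rfl⟩
  have hker {H : Type} [Group H] (σ : ℚ_[p]ˣ →* H)
      (hσ : ∀ t, σ t = 1 → IsSquare (t : ℚ_[p])) : σ.ker ≤ quadNormSubgroup (d : ℚ_[p]) :=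
    fun t ht => (hσ t ht).isQuadNorm _
  rcases eq_or_ne p 2 with rfl | hp
  · refine Subgroup.index_dvd_two_of_card_le squareClassTwo
      (hker _ fun _ => isSquare_of_squareClassTwo_eq_one) ?_
    have hfour := four_le_card_map_squareClassTwo fun h => hd (isSquare_of_squareClassTwo_eq_one h)
    have hcard : Nat.card (Multiplicative (ZMod 2) × (ZMod (2 ^ 3))ˣ) = 8 := by
      rw [Nat.card_eq_fintype_card]
      rfl
    omega
  · refine Subgroup.index_dvd_two_of_card_le (squareClass p)
      (hker _ fun _ => isSquare_of_squareClass_eq_one hp) ?_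
    obtain ⟨h, hh, hσ⟩ := exists_mem_quadNormSubgroup_squareClass_ne_one hp d
    have htwo : 1 < Nat.card ((quadNormSubgroup (d : ℚ_[p])).map (squareClass p)) :=
      (Subgroup.one_lt_card_iff_ne_bot _).mpr <| Subgroup.ne_bot_iff_exists_ne_one.mpr
        ⟨⟨_, Subgroup.mem_map_of_mem _ hh⟩, by simpa using hσ⟩
    have hcard : Nat.card (Multiplicative (ZMod 2) × ℤˣ) = 4 := by
      rw [Nat.card_eq_fintype_card]
      rfl
    omega

end Padic

section HilbertSymbol

variable {p : ℕ} [Fact p.Prime]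

lemma hilbertSym_eq_ite (a b : ℚ_[p]) :
    hilbertSym p a b = if IsSquare a ∨ IsQuadNorm a b then 1 else -1 :=
  if_congr (exists_sq_eq_add_iff a b) rfl rfl

lemma hilbertSym_comm (a b : ℚ_[p]) : hilbertSym p a b = hilbertSym p b a := by
  refine if_congr ⟨?_, ?_⟩ rfl rfl <;>
  · rintro ⟨x, y, z, hxyz, h⟩
    refine ⟨y, x, z, fun hyx => hxyz ?_, by rw [h]; ring⟩
    simp_all

lemma hilbertSym_eq_one_of_isQuadNorm {a b : ℚ_[p]} (h : IsQuadNorm a b) :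
    hilbertSym p a b = 1 := by
  simp [hilbertSym_eq_ite, h]

lemma hilbertSym_mul_self (a b : ℚ_[p]) : hilbertSym p a b * hilbertSym p a b = 1 := by
  rw [hilbertSym]
  split_ifs <;> rfl

lemma hilbertSym_mul_right (a : ℚ_[p]) {b b' : ℚ_[p]} (hb : b ≠ 0) (hb' : b' ≠ 0) :
    hilbertSym p a (b * b') = hilbertSym p a b * hilbertSym p a b' := by
  by_cases ha : IsSquare a
  · simp [hilbertSym_eq_ite, ha]
  have key := Subgroup.mul_mem_iff_of_index_dvd_two (Padic.quadNormSubgroup_index_dvd_two ha)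
    (a := Units.mk0 b hb) (b := Units.mk0 b' hb')
  change IsQuadNorm a (b * b') ↔ (IsQuadNorm a b ↔ IsQuadNorm a b') at key
  simp only [hilbertSym_eq_ite, ha, false_or, key]
  split_ifs <;> simp_all

lemma hilbertSym_mul_left {a a' : ℚ_[p]} (b : ℚ_[p]) (ha : a ≠ 0) (ha' : a' ≠ 0) :
    hilbertSym p (a * a') b = hilbertSym p a b * hilbertSym p a' b := by
  simp only [hilbertSym_comm _ b, hilbertSym_mul_right b ha ha']

lemma hilbertSym_eq_of_isQuadNorm_mul {a b b' : ℚ_[p]} (hb : b ≠ 0) (hb' : b' ≠ 0)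
    (h : IsQuadNorm a (b * b')) : hilbertSym p a b = hilbertSym p a b' := by
  have h1 := hilbertSym_eq_one_of_isQuadNorm h
  rw [hilbertSym_mul_right a hb hb'] at h1
  calc hilbertSym p a b = hilbertSym p a b * (hilbertSym p a b' * hilbertSym p a b') := by
        rw [hilbertSym_mul_self, mul_one]
    _ = hilbertSym p a b' := by rw [← mul_assoc, h1, one_mul]

end HilbertSymbol

/-- For `a, c, u ∈ ℚ_p^×` with `a + u·a⁻¹·c ≠ 0`:
`(−a·c, a + u·a⁻¹·c)·(u·a⁻¹, a²·u⁻¹ + c) = (−u·c, a)·(u·a⁻¹, −1)`. -/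
theorem hilbertSym_sign_identity (p : ℕ) [Fact p.Prime] (a c u : ℚ_[p])
    (ha : a ≠ 0) (hc : c ≠ 0) (hu : u ≠ 0) (h : a + u * a⁻¹ * c ≠ 0) :
    hilbertSym p (-(a * c)) (a + u * a⁻¹ * c) * hilbertSym p (u * a⁻¹) (a ^ 2 * u⁻¹ + c) =
      hilbertSym p (-(u * c)) a * hilbertSym p (u * a⁻¹) (-1) := by
  set s := u * a⁻¹
  set b := a + s * c
  have hs : s ≠ 0 := mul_ne_zero hu (inv_ne_zero ha)
  have h₁ : hilbertSym p s (a ^ 2 * u⁻¹ + c) = hilbertSym p s (-1) * hilbertSym p s b := by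
    have hb' : a ^ 2 * u⁻¹ + c = s⁻¹ * b := by simp only [b, s]; field_simp
    rw [hb', hilbertSym_eq_of_isQuadNorm_mul (b' := -1 * b) (by simp [hs, h]) (by simp [h])
      ⟨0, s⁻¹ * b, by field_simp; ring⟩, hilbertSym_mul_right s (by norm_num) h]
  have h₂ : hilbertSym p (-(a * c)) b * hilbertSym p s b = hilbertSym p (-(u * c)) b := by
    rw [← hilbertSym_mul_left b (by simp [ha, hc]) hs]
    congr 1
    simp only [s]
    field_simp
  have h₃ : hilbertSym p (-(u * c)) b = hilbertSym p (-(u * c)) a :=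
    hilbertSym_eq_of_isQuadNorm_mul h ha ⟨a, 1, by simp only [b, s]; field_simp; ring⟩
  calc hilbertSym p (-(a * c)) b * hilbertSym p s (a ^ 2 * u⁻¹ + c)
      = hilbertSym p (-(a * c)) b * hilbertSym p s b * hilbertSym p s (-1) := by rw [h₁]; ring
    _ = hilbertSym p (-(u * c)) a * hilbertSym p s (-1) := by rw [h₂, h₃]
end

section
/- Let p be a prime, n ≥ 2, let ψ be an additive character of ℚ_p that is trivial on pℤ_p, and let s₁, …, s_n ∈ ℤ_p. Define λ : I⁺ → ℂ^× by λ(g) = ψ(s₁·g_{1,2} + s₂·g_{2,3} + ⋯ + s_{n−1}·g_{n−1,n} + s_n·p⁻¹·g_{n,1}), where I⁺ is the pro-unipotent Iwahori subgroup of GL_n(ℤ_p). Then λ is a group homomorphism: λ(g·h) = λ(g)·λ(h) for all g, h ∈ I⁺. -/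
/-- The pro-unipotent Iwahori subgroup `I⁺` of `GL_n(ℤ_p)`: invertible matrices over `ℤ_p`
whose diagonal entries are `≡ 1 mod p` and whose below-diagonal entries are `≡ 0 mod p`. -/
def IwahoriPlus (p : ℕ) [Fact p.Prime] (n : ℕ) (g : Matrix (Fin n) (Fin n) ℤ_[p]) : Prop :=
  IsUnit g.det ∧ (∀ i : Fin n, (p : ℤ_[p]) ∣ (g i i - 1)) ∧
    ∀ i j : Fin n, (j : ℕ) < (i : ℕ) → (p : ℤ_[p]) ∣ g i j

/-- The affine generic character `λ_s(g) = ψ(s₁g₁₂ + ⋯ + s_{n−1}g_{n−1,n} + s_n p⁻¹ g_{n,1})`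
attached to `s ∈ ℤ_p^n` and an additive character `ψ` of `ℚ_p`. -/
noncomputable def affineChar (p : ℕ) [Fact p.Prime] (n : ℕ) (hn : 2 ≤ n)
    (ψ : AddChar ℚ_[p] ℂˣ) (s : Fin n → ℤ_[p]) (g : Matrix (Fin n) (Fin n) ℤ_[p]) : ℂˣ :=
  ψ ((∑ i : Fin (n - 1),
        ((s ⟨i, by have := i.isLt; omega⟩ : ℚ_[p]) *
          ((g ⟨i, by have := i.isLt; omega⟩ ⟨(i : ℕ) + 1, by have := i.isLt; omega⟩ : ℤ_[p]) :
            ℚ_[p]))) +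
      (s ⟨n - 1, by omega⟩ : ℚ_[p]) * ((p : ℚ_[p]))⁻¹ *
        ((g ⟨n - 1, by omega⟩ ⟨0, by omega⟩ : ℤ_[p]) : ℚ_[p]))

@[norm_cast] lemma padicInt_coe_finsetSum {p : ℕ} [Fact p.Prime] {α : Type*} (S : Finset α)
    (f : α → ℤ_[p]) : ((∑ i ∈ S, f i : ℤ_[p]) : ℚ_[p]) = ∑ i ∈ S, ((f i : ℤ_[p]) : ℚ_[p]) :=
  map_sum PadicInt.Coe.ringHom f S


/-- If `ψ` is an additive character of `ℚ_p` trivial on `pℤ_p`, then for `s ∈ ℤ_p^n` the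
affine generic character `λ_s` is a group homomorphism on `I⁺`. -/
theorem affineChar_mul (p : ℕ) [Fact p.Prime] (n : ℕ) (hn : 2 ≤ n)
    (ψ : AddChar ℚ_[p] ℂˣ) (hψ : ∀ x : ℤ_[p], ψ ((p : ℚ_[p]) * (x : ℚ_[p])) = 1)
    (s : Fin n → ℤ_[p]) (g h : Matrix (Fin n) (Fin n) ℤ_[p])
    (hg : IwahoriPlus p n g) (hh : IwahoriPlus p n h) :
    affineChar p n hn ψ s (g * h) = affineChar p n hn ψ s g * affineChar p n hn ψ s h := by
  obtain ⟨-, hg1, hg2⟩ := hg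
  obtain ⟨-, hh1, hh2⟩ := hh
  have hp0 : (p : ℚ_[p]) ≠ 0 := by
    exact_mod_cast (Nat.cast_ne_zero (R := ℚ_[p])).mpr (Fact.out : p.Prime).ne_zero
  -- superdiagonal divisibility
  have key : ∀ (i j : Fin n), (j : ℕ) = (i : ℕ) + 1 →
      (p : ℤ_[p]) ∣ ((g * h) i j - g i j - h i j) := by
    intro i j hij
    have hij' : i ≠ j := by
      intro e; rw [e] at hij; omega
    have hsplit : (g * h) i j - g i j - h i j =
        ∑ k : Fin n, (g i k * h k j - (if k = i then h i j else 0)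
          - (if k = j then g i j else 0)) := by
      simp only [Matrix.mul_apply, Finset.sum_sub_distrib, Finset.sum_ite_eq',
        Finset.mem_univ, if_true]
      ring
    rw [hsplit]
    refine Finset.dvd_sum fun k _ => ?_
    rcases eq_or_ne k i with rfl | hki
    · rw [if_pos rfl, if_neg hij']
      have e : g k k * h k j - h k j - 0 = (g k k - 1) * h k j := by ring
      rw [e]
      exact (hg1 k).mul_right _
    · rw [if_neg hki]
      rcases eq_or_ne k j with rfl | hkj
      · rw [if_pos rfl]
        have e : g i k * h k k - 0 - g i k = g i k * (h k k - 1) := by ring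
        rw [e]
        exact (hh1 k).mul_left _
      · rw [if_neg hkj]
        rw [sub_zero, sub_zero]
        have hki' : (k : ℕ) ≠ (i : ℕ) := fun e => hki (Fin.ext e)
        have hkj' : (k : ℕ) ≠ (j : ℕ) := fun e => hkj (Fin.ext e)
        rcases lt_or_gt_of_ne hki' with hlt | hgt
        · exact (hg2 i k hlt).mul_right _
        · have : (j : ℕ) < (k : ℕ) := by omega
          exact (hh2 k j this).mul_left _
  -- corner divisibility
  have keyc : ∀ (r c : Fin n), (r : ℕ) = n - 1 → (c : ℕ) = 0 →
      (p : ℤ_[p]) * p ∣ ((g * h) r c - g r c - h r c) := by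
    intro r c hrv hcv
    have hrc : r ≠ c := by
      intro e; rw [e, hcv] at hrv; omega
    have hsplit : (g * h) r c - g r c - h r c =
        ∑ k : Fin n, (g r k * h k c - (if k = r then h r c else 0)
          - (if k = c then g r c else 0)) := by
      simp only [Matrix.mul_apply, Finset.sum_sub_distrib, Finset.sum_ite_eq',
        Finset.mem_univ, if_true]
      ring
    rw [hsplit]
    refine Finset.dvd_sum fun k _ => ?_
    rcases eq_or_ne k r with rfl | hkr
    · rw [if_pos rfl, if_neg hrc]
      have e : g k k * h k c - h k c - 0 = (g k k - 1) * h k c := by ring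
      rw [e]
      have hc' : (c : ℕ) < (k : ℕ) := by omega
      exact mul_dvd_mul (hg1 k) (hh2 k c hc')
    · rw [if_neg hkr]
      rcases eq_or_ne k c with rfl | hkc
      · rw [if_pos rfl]
        have e : g r k * h k k - 0 - g r k = g r k * (h k k - 1) := by ring
        rw [e]
        have hc' : (k : ℕ) < (r : ℕ) := by omega
        exact mul_dvd_mul (hg2 r k hc') (hh1 k)
      · rw [if_neg hkc, sub_zero, sub_zero]
        have hk1 : (k : ℕ) ≠ (r : ℕ) := fun e => hkr (Fin.ext e)
        have hk0 : (k : ℕ) ≠ (c : ℕ) := fun e => hkc (Fin.ext e)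
        have h1 : (k : ℕ) < (r : ℕ) := by have := k.isLt; omega
        have h2 : (c : ℕ) < (k : ℕ) := by omega
        exact mul_dvd_mul (hg2 r k h1) (hh2 k c h2)
  obtain ⟨u, hu⟩ := keyc ⟨n - 1, by omega⟩ ⟨0, by omega⟩ rfl rfl
  -- sum divisibility
  have hTd : (p : ℤ_[p]) ∣ ∑ i : Fin (n - 1),
      s ⟨i, by have := i.isLt; omega⟩ *
        ((g * h) ⟨i, by have := i.isLt; omega⟩ ⟨(i : ℕ) + 1, by have := i.isLt; omega⟩
          - g ⟨i, by have := i.isLt; omega⟩ ⟨(i : ℕ) + 1, by have := i.isLt; omega⟩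
          - h ⟨i, by have := i.isLt; omega⟩ ⟨(i : ℕ) + 1, by have := i.isLt; omega⟩) :=
    Finset.dvd_sum fun i _ => ((key _ _ rfl).mul_left _)
  obtain ⟨t, ht⟩ := hTd
  -- sum identity over ℤ_[p]
  have h1 : (∑ i : Fin (n - 1),
        s ⟨i, by have := i.isLt; omega⟩ *
          (g * h) ⟨i, by have := i.isLt; omega⟩ ⟨(i : ℕ) + 1, by have := i.isLt; omega⟩)
      = (∑ i : Fin (n - 1),
          s ⟨i, by have := i.isLt; omega⟩ *
            g ⟨i, by have := i.isLt; omega⟩ ⟨(i : ℕ) + 1, by have := i.isLt; omega⟩)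
        + (∑ i : Fin (n - 1),
          s ⟨i, by have := i.isLt; omega⟩ *
            h ⟨i, by have := i.isLt; omega⟩ ⟨(i : ℕ) + 1, by have := i.isLt; omega⟩)
        + (p : ℤ_[p]) * t := by
    rw [← ht]
    simp only [mul_sub, Finset.sum_sub_distrib]
    ring
  -- cast to ℚ_[p]
  have h1Q : (∑ i : Fin (n - 1),
        ((s ⟨i, by have := i.isLt; omega⟩ : ℚ_[p]) *
          (((g * h) ⟨i, by have := i.isLt; omega⟩ ⟨(i : ℕ) + 1, by have := i.isLt; omega⟩ : ℤ_[p]) :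
            ℚ_[p])))
      = (∑ i : Fin (n - 1),
          ((s ⟨i, by have := i.isLt; omega⟩ : ℚ_[p]) *
            ((g ⟨i, by have := i.isLt; omega⟩ ⟨(i : ℕ) + 1, by have := i.isLt; omega⟩ : ℤ_[p]) :
              ℚ_[p])))
        + (∑ i : Fin (n - 1),
          ((s ⟨i, by have := i.isLt; omega⟩ : ℚ_[p]) *
            ((h ⟨i, by have := i.isLt; omega⟩ ⟨(i : ℕ) + 1, by have := i.isLt; omega⟩ : ℤ_[p]) :
              ℚ_[p])))
        + (p : ℚ_[p]) * (t : ℚ_[p]) := by exact_mod_cast congrArg _ h1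
  have h2 : ((g * h) ⟨n - 1, by omega⟩ ⟨0, by omega⟩ : ℤ_[p])
      = g ⟨n - 1, by omega⟩ ⟨0, by omega⟩ + h ⟨n - 1, by omega⟩ ⟨0, by omega⟩
        + (p : ℤ_[p]) * ((p : ℤ_[p]) * u) := by
    linear_combination hu
  have h2Q : (((g * h) ⟨n - 1, by omega⟩ ⟨0, by omega⟩ : ℤ_[p]) : ℚ_[p])
      = ((g ⟨n - 1, by omega⟩ ⟨0, by omega⟩ : ℤ_[p]) : ℚ_[p])
        + ((h ⟨n - 1, by omega⟩ ⟨0, by omega⟩ : ℤ_[p]) : ℚ_[p])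
        + (p : ℚ_[p]) * ((p : ℚ_[p]) * (u : ℚ_[p])) := by exact_mod_cast congrArg _ h2
  -- main argument identity in ℚ_[p]
  have main : ((∑ i : Fin (n - 1),
        ((s ⟨i, by have := i.isLt; omega⟩ : ℚ_[p]) *
          (((g * h) ⟨i, by have := i.isLt; omega⟩ ⟨(i : ℕ) + 1, by have := i.isLt; omega⟩ : ℤ_[p]) :
            ℚ_[p]))) +
      (s ⟨n - 1, by omega⟩ : ℚ_[p]) * ((p : ℚ_[p]))⁻¹ *
        (((g * h) ⟨n - 1, by omega⟩ ⟨0, by omega⟩ : ℤ_[p]) : ℚ_[p]))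
      = ((∑ i : Fin (n - 1),
        ((s ⟨i, by have := i.isLt; omega⟩ : ℚ_[p]) *
          ((g ⟨i, by have := i.isLt; omega⟩ ⟨(i : ℕ) + 1, by have := i.isLt; omega⟩ : ℤ_[p]) :
            ℚ_[p]))) +
      (s ⟨n - 1, by omega⟩ : ℚ_[p]) * ((p : ℚ_[p]))⁻¹ *
        ((g ⟨n - 1, by omega⟩ ⟨0, by omega⟩ : ℤ_[p]) : ℚ_[p]))
      + ((∑ i : Fin (n - 1),
        ((s ⟨i, by have := i.isLt; omega⟩ : ℚ_[p]) *
          ((h ⟨i, by have := i.isLt; omega⟩ ⟨(i : ℕ) + 1, by have := i.isLt; omega⟩ : ℤ_[p]) :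
            ℚ_[p]))) +
      (s ⟨n - 1, by omega⟩ : ℚ_[p]) * ((p : ℚ_[p]))⁻¹ *
        ((h ⟨n - 1, by omega⟩ ⟨0, by omega⟩ : ℤ_[p]) : ℚ_[p]))
      + (p : ℚ_[p]) * ((t + s ⟨n - 1, by omega⟩ * u : ℤ_[p]) : ℚ_[p]) := by
    rw [h1Q, h2Q]
    push_cast
    field_simp
    ring
  rw [affineChar, affineChar, affineChar, main, AddChar.map_add_eq_mul,
    AddChar.map_add_eq_mul, hψ, mul_one]
end

section
/- Let p be a prime, l ≥ 1, let ψ be an additive character of ℚ_p that is trivial on pℤ_p, and let s = (s₁, …, s_{2l}) ∈ ℤ_p^{2l}. Define s′ ∈ ℤ_p^{2l} by s′_i = −s_{2l−i} for 1 ≤ i ≤ 2l−1 with i ≠ l, s′_l = s_l, and s′_{2l} = s_{2l}. Then for every g in the pro-unipotent Iwahori subgroup I⁺ of GL_{2l}(ℤ_p), λ_s(θ(g)) = λ_{s′}(g). -/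
/-- The `2l × 2l` anti-diagonal matrix `J′` whose `(i, 2l+1−i)` entry is `1` for `i ≤ l`
and `−1` for `i > l` (1-based indexing). -/
noncomputable def Jmat (p : ℕ) [Fact p.Prime] (l : ℕ) :
    Matrix (Fin (2 * l)) (Fin (2 * l)) ℤ_[p] :=
  Matrix.of fun i j =>
    if (i : ℕ) + (j : ℕ) = 2 * l - 1 then (if (i : ℕ) < l then 1 else -1) else 0

/-- The involution `θ(g) = J′⁻¹ · ᵗg⁻¹ · J′` of `GL_{2l}`. -/
noncomputable def thetaInv (p : ℕ) [Fact p.Prime] (l : ℕ)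
    (g : Matrix (Fin (2 * l)) (Fin (2 * l)) ℤ_[p]) :
    Matrix (Fin (2 * l)) (Fin (2 * l)) ℤ_[p] :=
  (Jmat p l)⁻¹ * Matrix.transpose g⁻¹ * Jmat p l

section Aux

variable {p : ℕ} [Fact p.Prime]

lemma dvd_iff_toZMod_eq_zero (x : ℤ_[p]) :
    (p : ℤ_[p]) ∣ x ↔ (PadicInt.toZMod x : ZMod p) = 0 := by
  rw [← Ideal.mem_span_singleton, ← PadicInt.maximalIdeal_eq_span_p, ← PadicInt.ker_toZMod,
    RingHom.mem_ker]

lemma Jsq (l : ℕ) : Jmat p l * Jmat p l = -1 := by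
  ext a b
  have ha := a.isLt
  have hb := b.isLt
  rw [Matrix.mul_apply, Finset.sum_eq_single (⟨2*l-1-(a:ℕ), by omega⟩ : Fin (2*l))]
  · simp only [Jmat, Matrix.of_apply, Matrix.neg_apply, Matrix.one_apply]
    rcases eq_or_ne a b with rfl | hab
    · rw [if_pos rfl, if_pos (show (a:ℕ) + ((⟨2*l-1-(a:ℕ), by omega⟩ : Fin (2*l)):ℕ) = 2*l-1 by
        simp; omega)]
      split_ifs <;> first | (exfalso; omega) | norm_num
    · have hval : (a:ℕ) ≠ (b:ℕ) := fun h => hab (Fin.ext h)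
      rw [if_neg (show ¬(((⟨2*l-1-(a:ℕ), by omega⟩ : Fin (2*l)):ℕ) + (b:ℕ) = 2*l-1) by
        simp; omega), mul_zero, if_neg hab, neg_zero]
  · intro j _ hj
    have hval : (j:ℕ) ≠ 2*l-1-(a:ℕ) := fun h => hj (Fin.ext (by simp [h]))
    simp only [Jmat, Matrix.of_apply]
    rw [if_neg (by omega), zero_mul]
  · intro h; exact absurd (Finset.mem_univ _) h

lemma Jinv (l : ℕ) : (Jmat p l)⁻¹ = -(Jmat p l) :=
  Matrix.inv_eq_right_inv (by rw [Matrix.mul_neg, Jsq, neg_neg])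

lemma theta_apply (l : ℕ) (g : Matrix (Fin (2*l)) (Fin (2*l)) ℤ_[p]) (a b : Fin (2*l)) :
    thetaInv p l g a b =
      ((if (a:ℕ) < l then -1 else 1) * (if 2*l-1-(b:ℕ) < l then 1 else -1)) *
        g⁻¹ ⟨2*l-1-(b:ℕ), by have := b.isLt; omega⟩ ⟨2*l-1-(a:ℕ), by have := a.isLt; omega⟩ := by
  have ha := a.isLt; have hb := b.isLt
  rw [thetaInv, Jinv, Matrix.mul_apply,
    Finset.sum_eq_single (⟨2*l-1-(b:ℕ), by omega⟩ : Fin (2*l))]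
  · rw [Matrix.mul_apply, Finset.sum_eq_single (⟨2*l-1-(a:ℕ), by omega⟩ : Fin (2*l))]
    · simp only [Jmat, Matrix.of_apply, Matrix.neg_apply, Matrix.transpose_apply]
      rw [if_pos (show (a:ℕ) + ((⟨2*l-1-(a:ℕ), by omega⟩ : Fin (2*l)):ℕ) = 2*l-1 by
          simp; omega),
        if_pos (show ((⟨2*l-1-(b:ℕ), by omega⟩ : Fin (2*l)):ℕ) + (b:ℕ) = 2*l-1 by
          simp; omega)]
      split_ifs <;> ring
    · intro i _ hi
      have hval : (i:ℕ) ≠ 2*l-1-(a:ℕ) := fun h => hi (Fin.ext (by simp [h]))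
      simp only [Jmat, Matrix.of_apply, Matrix.neg_apply]
      rw [if_neg (by omega), neg_zero, zero_mul]
    · intro h; exact absurd (Finset.mem_univ _) h
  · intro j _ hj
    have hval : (j:ℕ) ≠ 2*l-1-(b:ℕ) := fun h => hj (Fin.ext (by simp [h]))
    simp only [Jmat, Matrix.of_apply]
    rw [if_neg (by omega), mul_zero]
  · intro h; exact absurd (Finset.mem_univ _) h

lemma theta_apply' (l : ℕ) (g : Matrix (Fin (2*l)) (Fin (2*l)) ℤ_[p]) (a b c d : ℕ)
    (ha : a < 2*l) (hb : b < 2*l) (hc : c < 2*l) (hd : d < 2*l)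
    (hca : c = 2*l-1-b) (hdb : d = 2*l-1-a) :
    thetaInv p l g ⟨a, ha⟩ ⟨b, hb⟩ =
      ((if a < l then -1 else 1) * (if c < l then 1 else -1)) * g⁻¹ ⟨c, hc⟩ ⟨d, hd⟩ := by
  subst hca; subst hdb
  exact theta_apply l g ⟨a, ha⟩ ⟨b, hb⟩

lemma inv_facts {n : ℕ} (g : Matrix (Fin n) (Fin n) ℤ_[p]) (hg : IwahoriPlus p n g) :
    (∀ i j : Fin n, (j:ℕ) < (i:ℕ) → (p:ℤ_[p]) ∣ g⁻¹ i j) ∧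
    (∀ i : Fin n, (p:ℤ_[p]) ∣ (g⁻¹ i i - 1)) ∧
    (∀ i j : Fin n, (i:ℕ)+1 = (j:ℕ) → (p:ℤ_[p]) ∣ (g⁻¹ i j + g i j)) := by
  obtain ⟨hdet, hdiag, hlow⟩ := hg
  set π := (PadicInt.toZMod : ℤ_[p] →+* ZMod p) with hπ
  set G := g.map π with hG
  set H := (g⁻¹).map π with hH
  have hig : g⁻¹ * g = 1 := Matrix.nonsing_inv_mul g hdet
  have hHG : H * G = 1 := by
    rw [hG, hH, ← Matrix.map_mul, hig, Matrix.map_one _ (map_zero π) (map_one π)]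
  have hGb : G.BlockTriangular (fun i : Fin n => (i:ℕ)) := by
    intro i j hij
    show π (g i j) = 0
    exact (dvd_iff_toZMod_eq_zero _).mp (hlow i j hij)
  have hGdet : IsUnit G.det := by rw [hG, ← RingHom.mapMatrix_apply, ← RingHom.map_det]; exact hdet.map π
  haveI := Matrix.invertibleOfIsUnitDet G hGdet
  have hGinv : G⁻¹ = H := Matrix.inv_eq_left_inv hHG
  have hHb : H.BlockTriangular (fun i : Fin n => (i:ℕ)) :=
    hGinv ▸ Matrix.blockTriangular_inv_of_blockTriangular hGb
  have hGd : ∀ i, G i i = 1 := by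
    intro i
    have h1 := (dvd_iff_toZMod_eq_zero _).mp (hdiag i)
    rw [map_sub, map_one, sub_eq_zero] at h1
    exact h1
  have hHd : ∀ i, H i i = 1 := by
    intro i
    have h1 : (H * G) i i = 1 := by rw [hHG, Matrix.one_apply_eq]
    rw [Matrix.mul_apply, Finset.sum_eq_single i] at h1
    · rwa [hGd i, mul_one] at h1
    · intro k _ hk
      rcases Nat.lt_trichotomy (k:ℕ) (i:ℕ) with h|h|h
      · rw [hHb h, zero_mul]
      · exact absurd (Fin.ext h) hk
      · rw [hGb h, mul_zero]
    · intro h; exact absurd (Finset.mem_univ _) h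
  refine ⟨?_, ?_, ?_⟩
  · intro i j hij
    rw [dvd_iff_toZMod_eq_zero]
    exact hHb hij
  · intro i
    rw [dvd_iff_toZMod_eq_zero, map_sub, map_one]
    have h1 : π (g⁻¹ i i) = 1 := hHd i
    rw [h1, sub_self]
  · intro i j hij
    rw [dvd_iff_toZMod_eq_zero, map_add]
    have hne : i ≠ j := by intro h; rw [h] at hij; omega
    have h1 : (H * G) i j = 0 := by rw [hHG, Matrix.one_apply_ne hne]
    rw [Matrix.mul_apply] at h1
    have h2 : ∀ k : Fin n, k ≠ i → k ≠ j → H i k * G k j = 0 := by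
      intro k hki hkj
      have hki' : (k:ℕ) ≠ (i:ℕ) := fun h => hki (Fin.ext h)
      have hkj' : (k:ℕ) ≠ (j:ℕ) := fun h => hkj (Fin.ext h)
      rcases Nat.lt_or_ge (k:ℕ) (i:ℕ) with h|h
      · rw [hHb h, zero_mul]
      · rw [hGb (show (j:ℕ) < (k:ℕ) by omega), mul_zero]
    have h3 : ∑ k, H i k * G k j = ∑ k ∈ ({i, j} : Finset (Fin n)), H i k * G k j := by
      symm
      apply Finset.sum_subset (Finset.subset_univ _)
      intro k _ hk
      simp only [Finset.mem_insert, Finset.mem_singleton] at hk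
      push_neg at hk
      exact h2 k hk.1 hk.2
    rw [h3, Finset.sum_pair hne, hHd i, hGd j, one_mul, mul_one] at h1
    have h4 : π (g⁻¹ i j) + π (g i j) = H i j + G i j := rfl
    rw [h4, add_comm]
    exact h1

lemma corner_fact {n : ℕ} (hn : 2 ≤ n) (g : Matrix (Fin n) (Fin n) ℤ_[p])
    (hg : IwahoriPlus p n g) :
    (p:ℤ_[p])^2 ∣ (g⁻¹ ⟨n-1, by omega⟩ ⟨0, by omega⟩ + g ⟨n-1, by omega⟩ ⟨0, by omega⟩) := by
  obtain ⟨F1, F2, -⟩ := inv_facts g hg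
  obtain ⟨hdet, hdiag, hlow⟩ := hg
  have hgi : g * g⁻¹ = 1 := Matrix.mul_nonsing_inv g hdet
  set a : Fin n := ⟨n-1, by omega⟩ with hadef
  set z : Fin n := ⟨0, by omega⟩ with hzdef
  have hav : (a:ℕ) = n-1 := rfl
  have hzv : (z:ℕ) = 0 := rfl
  have hne : a ≠ z := by
    intro h
    have := congrArg Fin.val h
    rw [hav, hzv] at this; omega
  have h1 : ∑ k, g a k * g⁻¹ k z = 0 := by
    rw [← Matrix.mul_apply, hgi, Matrix.one_apply_ne hne]
  rw [← Finset.sum_sdiff (Finset.subset_univ ({a, z} : Finset (Fin n))),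
    Finset.sum_pair hne] at h1
  have hrest : (p:ℤ_[p])^2 ∣ ∑ k ∈ Finset.univ \ ({a, z} : Finset (Fin n)), g a k * g⁻¹ k z := by
    apply Finset.dvd_sum
    intro k hk
    simp only [Finset.mem_sdiff, Finset.mem_insert, Finset.mem_singleton] at hk
    obtain ⟨-, hk⟩ := hk
    push_neg at hk
    have hk1 : (k:ℕ) ≠ n-1 := fun h => hk.1 (Fin.ext (by rw [hav, h]))
    have hk0 : (k:ℕ) ≠ 0 := fun h => hk.2 (Fin.ext (by rw [hzv, h]))
    have hkl := k.isLt
    rw [sq]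
    exact mul_dvd_mul (hlow a k (by omega)) (F1 k z (by omega))
  have t1 : (p:ℤ_[p])^2 ∣ (g a a * g⁻¹ a z - g⁻¹ a z) := by
    have e : g a a * g⁻¹ a z - g⁻¹ a z = (g a a - 1) * g⁻¹ a z := by ring
    rw [e, sq]
    exact mul_dvd_mul (hdiag a) (F1 a z (by omega))
  have t2 : (p:ℤ_[p])^2 ∣ (g a z * g⁻¹ z z - g a z) := by
    have e : g a z * g⁻¹ z z - g a z = g a z * (g⁻¹ z z - 1) := by ring
    rw [e, sq]
    exact mul_dvd_mul (hlow a z (by omega)) (F2 z)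
  have hcomb : g⁻¹ a z + g a z =
      - (∑ k ∈ Finset.univ \ ({a, z} : Finset (Fin n)), g a k * g⁻¹ k z)
        - (g a a * g⁻¹ a z - g⁻¹ a z) - (g a z * g⁻¹ z z - g a z) := by
    linear_combination h1
  rw [hcomb]
  exact dvd_sub (dvd_sub (Dvd.dvd.neg_right hrest) t1) t2

end Aux

set_option maxHeartbeats 2000000 in
/-- For `s ∈ ℤ_p^{2l}`, define `s′` by `s′_i = −s_{2l−i}` for `1 ≤ i ≤ 2l−1`, `i ≠ l`,
`s′_l = s_l` and `s′_{2l} = s_{2l}` (1-based). Then `λ_s(θ(g)) = λ_{s′}(g)` on `I⁺`. -/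
theorem affineChar_theta (p : ℕ) [Fact p.Prime] (l : ℕ) (hl : 1 ≤ l)
    (ψ : AddChar ℚ_[p] ℂˣ) (hψ : ∀ x : ℤ_[p], ψ ((p : ℚ_[p]) * (x : ℚ_[p])) = 1)
    (s s' : Fin (2 * l) → ℤ_[p])
    (hmid : s' ⟨l - 1, by omega⟩ = s ⟨l - 1, by omega⟩)
    (hlast : s' ⟨2 * l - 1, by omega⟩ = s ⟨2 * l - 1, by omega⟩)
    (hoth : ∀ i : Fin (2 * l), (i : ℕ) ≠ l - 1 → (i : ℕ) ≠ 2 * l - 1 →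
      s' i = - s ⟨2 * l - 2 - (i : ℕ), by omega⟩)
    (g : Matrix (Fin (2 * l)) (Fin (2 * l)) ℤ_[p]) (hg : IwahoriPlus p (2 * l) g) :
    affineChar p (2 * l) (by omega) ψ s (thetaInv p l g) =
      affineChar p (2 * l) (by omega) ψ s' g := by
  obtain ⟨F1, F2, F3⟩ := inv_facts g hg
  have F4 := corner_fact (p := p) (show 2 ≤ 2*l by omega) g hg
  choose w3 hw3 using fun (j : Fin (2*l-1)) =>
    F3 ⟨(j:ℕ), by have := j.isLt; omega⟩ ⟨(j:ℕ)+1, by have := j.isLt; omega⟩ rfl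
  obtain ⟨w4, hw4⟩ := F4
  have hp0 : (p:ℚ_[p]) ≠ 0 := Nat.cast_ne_zero.mpr (Fact.out (p := p.Prime)).ne_zero
  have hp : (p:ℚ_[p]) * (p:ℚ_[p])⁻¹ = 1 := mul_inv_cancel₀ hp0
  have coe_sum : ∀ (t : Fin (2*l-1) → ℤ_[p]),
      ((∑ i, t i : ℤ_[p]) : ℚ_[p]) = ∑ i, ((t i : ℤ_[p]) : ℚ_[p]) := fun t =>
    map_sum (PadicInt.Coe.ringHom) t Finset.univ
  -- corner entry of θ(g)
  have hθc : thetaInv p l g ⟨2*l-1, by omega⟩ ⟨0, by omega⟩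
      = - g⁻¹ ⟨2*l-1, by omega⟩ ⟨0, by omega⟩ := by
    rw [theta_apply' l g (2*l-1) 0 (2*l-1) 0 (by omega) (by omega) (by omega) (by omega)
      (by omega) (by omega)]
    rw [if_neg (by omega : ¬(2*l-1 < l)), if_neg (by omega : ¬(2*l-1 < l))]
    ring
  -- superdiagonal entries of θ(g)
  have hθ : ∀ j : Fin (2*l-1),
      thetaInv p l g ⟨2*l-2-(j:ℕ), by have := j.isLt; omega⟩
          ⟨(2*l-2-(j:ℕ))+1, by have := j.isLt; omega⟩
        = (if (j:ℕ) = l-1 then -1 else 1)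
            * g⁻¹ ⟨(j:ℕ), by have := j.isLt; omega⟩ ⟨(j:ℕ)+1, by have := j.isLt; omega⟩ := by
    intro j
    have hj := j.isLt
    rw [theta_apply' l g (2*l-2-(j:ℕ)) ((2*l-2-(j:ℕ))+1) (j:ℕ) ((j:ℕ)+1)
      (by omega) (by omega) (by omega) (by omega) (by omega) (by omega)]
    split_ifs <;> first | (exfalso; omega) | ring
  -- per-term identity for the reindexed sum
  have key : ∀ j : Fin (2*l-1),
      (s ⟨2*l-2-(j:ℕ), by have := j.isLt; omega⟩ : ℚ_[p])
        * ((thetaInv p l g ⟨2*l-2-(j:ℕ), by have := j.isLt; omega⟩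
            ⟨(2*l-2-(j:ℕ))+1, by have := j.isLt; omega⟩ : ℤ_[p]) : ℚ_[p])
      = (s' ⟨(j:ℕ), by have := j.isLt; omega⟩ : ℚ_[p])
          * ((g ⟨(j:ℕ), by have := j.isLt; omega⟩ ⟨(j:ℕ)+1, by have := j.isLt; omega⟩ : ℤ_[p]) : ℚ_[p])
        + (p:ℚ_[p]) * ((-(s' ⟨(j:ℕ), by have := j.isLt; omega⟩ * w3 j) : ℤ_[p]) : ℚ_[p]) := by
    intro j
    have hj := j.isLt
    have hcast : ((g⁻¹ ⟨(j:ℕ), by omega⟩ ⟨(j:ℕ)+1, by omega⟩ : ℤ_[p]) : ℚ_[p])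
        + ((g ⟨(j:ℕ), by omega⟩ ⟨(j:ℕ)+1, by omega⟩ : ℤ_[p]) : ℚ_[p])
        = (p:ℚ_[p]) * ((w3 j : ℤ_[p]) : ℚ_[p]) := by
      exact_mod_cast congrArg (fun x : ℤ_[p] => (x : ℚ_[p])) (hw3 j)
    rw [hθ j]
    by_cases hc : (j:ℕ) = l-1
    · rw [if_pos hc]
      have e1 : (⟨2*l-2-(j:ℕ), by omega⟩ : Fin (2*l)) = ⟨(j:ℕ), by omega⟩ :=
        Fin.ext (by simp; omega)
      have e2 : s' ⟨(j:ℕ), by omega⟩ = s ⟨(j:ℕ), by omega⟩ := by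
        have e3 : (⟨(j:ℕ), by omega⟩ : Fin (2*l)) = ⟨l-1, by omega⟩ := Fin.ext (by simp [hc])
        rw [e3]; exact hmid
      rw [e1, e2]
      push_cast
      linear_combination (-(s ⟨(j:ℕ), by omega⟩ : ℚ_[p])) * hcast
    · rw [if_neg hc]
      have e2 : s' ⟨(j:ℕ), by omega⟩ = - s ⟨2*l-2-(j:ℕ), by omega⟩ :=
        hoth ⟨(j:ℕ), by omega⟩ hc (by simp; omega)
      rw [e2]
      push_cast
      linear_combination ((s ⟨2*l-2-(j:ℕ), by omega⟩ : ℚ_[p])) * hcast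
  -- the reindexing permutation
  let σ : Equiv.Perm (Fin (2*l-1)) :=
    ⟨fun i => ⟨2*l-2-(i:ℕ), by have := i.isLt; omega⟩,
     fun i => ⟨2*l-2-(i:ℕ), by have := i.isLt; omega⟩,
     fun i => Fin.ext (by have := i.isLt; simp; omega),
     fun i => Fin.ext (by have := i.isLt; simp; omega)⟩
  have hsum : ∑ i : Fin (2*l-1),
      (s ⟨(i:ℕ), by have := i.isLt; omega⟩ : ℚ_[p])
        * ((thetaInv p l g ⟨(i:ℕ), by have := i.isLt; omega⟩
            ⟨(i:ℕ)+1, by have := i.isLt; omega⟩ : ℤ_[p]) : ℚ_[p])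
      = ∑ i : Fin (2*l-1),
        ((s' ⟨(i:ℕ), by have := i.isLt; omega⟩ : ℚ_[p])
            * ((g ⟨(i:ℕ), by have := i.isLt; omega⟩ ⟨(i:ℕ)+1, by have := i.isLt; omega⟩ : ℤ_[p]) : ℚ_[p])
          + (p:ℚ_[p]) * ((-(s' ⟨(i:ℕ), by have := i.isLt; omega⟩ * w3 i) : ℤ_[p]) : ℚ_[p])) := by
    rw [← Equiv.sum_comp σ (fun i : Fin (2*l-1) =>
      (s ⟨(i:ℕ), by have := i.isLt; omega⟩ : ℚ_[p])
        * ((thetaInv p l g ⟨(i:ℕ), by have := i.isLt; omega⟩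
            ⟨(i:ℕ)+1, by have := i.isLt; omega⟩ : ℤ_[p]) : ℚ_[p]))]
    exact Finset.sum_congr rfl fun j _ => key j
  -- corner identity
  have keyc : (s ⟨2*l-1, by omega⟩ : ℚ_[p]) * (p:ℚ_[p])⁻¹
        * ((-(g⁻¹ ⟨2*l-1, by omega⟩ ⟨0, by omega⟩) : ℤ_[p]) : ℚ_[p])
      = (s' ⟨2*l-1, by omega⟩ : ℚ_[p]) * (p:ℚ_[p])⁻¹
          * ((g ⟨2*l-1, by omega⟩ ⟨0, by omega⟩ : ℤ_[p]) : ℚ_[p])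
        + (p:ℚ_[p]) * ((-(s' ⟨2*l-1, by omega⟩ * w4) : ℤ_[p]) : ℚ_[p]) := by
    have hcast : ((g⁻¹ ⟨2*l-1, by omega⟩ ⟨0, by omega⟩ : ℤ_[p]) : ℚ_[p])
        + ((g ⟨2*l-1, by omega⟩ ⟨0, by omega⟩ : ℤ_[p]) : ℚ_[p])
        = (p:ℚ_[p])^2 * ((w4 : ℤ_[p]) : ℚ_[p]) := by
      exact_mod_cast congrArg (fun x : ℤ_[p] => (x : ℚ_[p])) hw4
    rw [hlast]
    push_cast
    linear_combination (-(s ⟨2*l-1, by omega⟩ : ℚ_[p]) * (p:ℚ_[p])⁻¹) * hcast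
      + (-(p:ℚ_[p]) * (s ⟨2*l-1, by omega⟩ : ℚ_[p]) * ((w4 : ℤ_[p]) : ℚ_[p])) * hp
  have main : ∀ (A B : ℚ_[p]) (y : ℤ_[p]), A = B + (p:ℚ_[p]) * (y:ℚ_[p]) → ψ A = ψ B := by
    intro A B y h
    rw [h, AddChar.map_add_eq_mul, hψ y, mul_one]
  simp only [affineChar]
  apply main _ _ ((∑ j : Fin (2*l-1), -(s' ⟨(j:ℕ), by have := j.isLt; omega⟩ * w3 j))
    + -(s' ⟨2*l-1, by omega⟩ * w4))
  rw [hθc, hsum, Finset.sum_add_distrib, keyc, ← Finset.mul_sum]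
  push_cast [coe_sum]
  ring
end
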